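/- Suppose a system ⟨T_s⟩_{s ∈ 2^<ω} of trees satisfies: each T_s is a Silver tree with stem r_s; T_{s⌢i} ⊆ T_s↾(r_s⌢i) for all s and i ∈ {0,1}; |r_s| = h(k) for all s ∈ 2^k where h(0) < h(1) < ⋯ is strictly increasing. Then [⋂_n ⋃_{s ∈ 2^n} T_s] = ⋂_n ⋃_{s ∈ 2^n} [T_s]. -/
import Mathlib


/-- E0 equivalence: equal at all but finitely many coordinates. -/
def E0 (x y : ℕ → Bool) : Prop := {n | x n ≠ y n}.Finite

/-- Finite-flip action of a string σ on a point of Cantor space. -/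
def actF (σ : List Bool) (x : ℕ → Bool) : ℕ → Bool :=
  fun k => xor (σ.getD k false) (x k)

/-- Finite-flip action of a string σ on a string t. -/
def actS (σ t : List Bool) : List Bool :=
  List.ofFn fun i : Fin t.length => xor (σ.getD i false) (t.get i)

/-- A tree: a set of binary strings closed under initial segments. -/
def IsTree (T : Set (List Bool)) : Prop :=
  ∀ s ∈ T, ∀ t, t <+: s → t ∈ T

/-- The length-n initial segment of x, as a string. -/
def seg (x : ℕ → Bool) (n : ℕ) : List Bool := List.ofFn fun i : Fin n => x i

/-- The set of branches [T] of a tree T. -/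
def branches (T : Set (List Bool)) : Set (ℕ → Bool) := {x | ∀ n, seg x n ∈ T}

/-- T↾u : the strings of T comparable with u. -/
def restrictT (T : Set (List Bool)) (u : List Bool) : Set (List Bool) :=
  {t ∈ T | u <+: t ∨ t <+: u}

/-- A perfect tree: nonempty, no endpoints, every node has a splitting extension. -/
def IsPerfect (T : Set (List Bool)) : Prop :=
  IsTree T ∧ T.Nonempty ∧
  (∀ s ∈ T, ∃ t ∈ T, s <+: t ∧ s ≠ t) ∧
  (∀ s ∈ T, ∃ t ∈ T, s <+: t ∧ t ++ [false] ∈ T ∧ t ++ [true] ∈ T)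

/-- A Silver tree with witnessing partition ω = u0 ∪ u1 ∪ u01. -/
def IsSilverWith (T : Set (List Bool)) (u0 u1 u01 : Set ℕ) : Prop :=
  IsTree T ∧ T.Nonempty ∧
  (u0 ∪ u1 ∪ u01 = Set.univ) ∧
  Disjoint u0 u1 ∧ Disjoint u0 u01 ∧ Disjoint u1 u01 ∧
  u01.Infinite ∧
  ∀ s ∈ T,
    (s.length ∈ u0 → s ++ [false] ∈ T ∧ s ++ [true] ∉ T) ∧
    (s.length ∈ u1 → s ++ [true] ∈ T ∧ s ++ [false] ∉ T) ∧
    (s.length ∈ u01 → s ++ [false] ∈ T ∧ s ++ [true] ∈ T)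

/-- A Silver tree. -/
def IsSilver (T : Set (List Bool)) : Prop := ∃ u0 u1 u01, IsSilverWith T u0 u1 u01

/-- r is the stem of T: the longest string with T↾r = T. -/
def IsStem (T : Set (List Bool)) (r : List Bool) : Prop :=
  r ∈ T ∧ restrictT T r = T ∧ ∀ t ∈ T, restrictT T t = T → t.length ≤ r.length


lemma seg_succ (x : ℕ → Bool) (n : ℕ) : seg x (n+1) = seg x n ++ [x n] := by
  rw [seg, seg, List.ofFn_succ', List.concat_eq_append]
  rfl

lemma seg_prefix (x : ℕ → Bool) {m n : ℕ} (hmn : m ≤ n) : seg x m <+: seg x n := by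
  induction n with
  | zero => interval_cases m; exact List.prefix_rfl
  | succ n ih =>
    rcases Nat.lt_or_ge m (n+1) with h'|h'
    · exact (ih (Nat.lt_succ_iff.mp h')).trans (by rw [seg_succ]; exact ⟨[x n], rfl⟩)
    · have : m = n+1 := le_antisymm hmn h'
      subst this; exact List.prefix_rfl

lemma finite_len (n : ℕ) : Finite {s : List Bool // s.length = n} := by
  apply Finite.of_injective (fun s : {s : List Bool // s.length = n} =>
    (fun i : Fin n => s.1.get (Fin.cast s.2.symm i)))
  intro a b hab
  ext1
  apply List.ext_get (a.2.trans b.2.symm)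
  intro i h1 h2
  have := congrFun hab ⟨i, a.2 ▸ h1⟩
  simpa using this

theorem fusion_branches_eq (T : List Bool → Set (List Bool))
    (r : List Bool → List Bool) (h : ℕ → ℕ)
    (hSil : ∀ s, IsSilver (T s))
    (hstem : ∀ s, IsStem (T s) (r s))
    (hsub : ∀ s, ∀ i : Bool, T (s ++ [i]) ⊆ restrictT (T s) (r s ++ [i]))
    (hmono : StrictMono h)
    (hlen : ∀ s : List Bool, (r s).length = h s.length) :
    branches (⋂ n, ⋃ s ∈ {s : List Bool | s.length = n}, T s) =
      ⋂ n, ⋃ s ∈ {s : List Bool | s.length = n}, branches (T s) := by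
  ext x
  simp only [branches, Set.mem_setOf_eq, Set.mem_iInter, Set.mem_iUnion, exists_prop]
  constructor
  · intro hx n
    have key : ∀ m : ℕ, ∃ s : {s : List Bool // s.length = n}, seg x m ∈ T s.1 := by
      intro m
      obtain ⟨s, hs, hmem⟩ := hx m n
      exact ⟨⟨s, hs⟩, hmem⟩
    choose f hf using key
    have : Finite {s : List Bool // s.length = n} := finite_len n
    obtain ⟨s, hs⟩ := Finite.exists_infinite_fiber f
    refine ⟨s.1, s.2, fun m => ?_⟩
    obtain ⟨m', hm', hlt⟩ := (Set.infinite_coe_iff.mp hs).exists_gt m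
    have hm'' : f m' = s := hm'
    have hmem : seg x m' ∈ T s.1 := hm'' ▸ hf m'
    obtain ⟨u0, u1, u01, hT, -⟩ := hSil s.1
    exact hT _ hmem _ (seg_prefix x hlt.le)
  · intro hx m n
    obtain ⟨s, hsl, hs⟩ := hx n
    exact ⟨s, hsl, hs m⟩
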